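/- arXiv:1902.01456 — 7 statements merged into one kernel-verified Lean document; each statement's English description precedes it below -/
import Mathlib

section
/- Let (Ω,P) be a probability space, ν : Ω → ℝ uniformly distributed on [0,1], and Z₁,…,Z_k real-valued random variables such that the vector (Z₁,…,Z_k) is independent of ν and E[Z_j²] ≤ C_Z² for every j, where C_Z ≥ 0. Let ω, ω̃ ∈ [0,∞)^k with ω₁+…+ω_k ≤ 1 and ω̃₁+…+ω̃_k ≤ 1, and let μ, μ̃, σ, σ̃ ∈ ℝ^k with |μ_j| ≤ μ̄, |μ̃_j| ≤ μ̄, |σ_j| ≤ σ̄, |σ̃_j| ≤ σ̄ for all j. Set s₀ = 0, s_j = ω₁+…+ω_j, and s̃_j likewise, and define the mixture draws e = Σ_{j=1}^k 1{ν ∈ [s_{j−1}, s_j)}·(μ_j + σ_j Z_j) and ẽ = Σ_{j=1}^k 1{ν ∈ [s̃_{j−1}, s̃_j)}·(μ̃_j + σ̃_j Z_j). If the Euclidean distance of the stacked parameter vectors satisfies ‖(ω,μ,σ) − (ω̃,μ̃,σ̃)‖₂ ≤ δ with 0 ≤ δ ≤ 1, then (E|e − ẽ|²)^{1/2} ≤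 2√2·(1 + C_Z)·(1 + μ̄ + σ̄)·(1 + k)·√δ. -/
/-!
Write `X j = μ j + σ j * Z j`, `X' j = μ' j + σ' j * Z j`, and `I j`, `I' j` for the intervals
selecting component `j` under the weights `w`, `w'`. The difference of the two draws is `T + U` with
`T = ∑ j, (1{ν ∈ I j} - 1{ν ∈ I' j}) * X j` and `U = ∑ j, 1{ν ∈ I' j} * (X j - X' j)`.
Each family of intervals is disjoint, so at most two indicator differences are nonzero and
`T² ≤ 2 ∑ j, 1{ν ∈ I j ∆ I' j} * X j²`. By independence and uniformity of `ν` the `j`-th term has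
mean at most `Leb (I j ∆ I' j) * E[X j²]`, and the endpoints of `I j` and `I' j` differ by at most
`k δ`, whence `‖T‖₂ = O(k √δ)`. Disjointness of the `I' j` also gives `U² ≤ ∑ j, (X j - X' j)²`,
so `‖U‖₂ = O(δ) ≤ O(√δ)`, and Minkowski's inequality concludes.
-/

open MeasureTheory ProbabilityTheory Finset
open scoped symmDiff

lemma sq_sum_mul_le_sum_abs_mul_sum_abs_mul_sq {ι : Type*} (s : Finset ι) (c y : ι → ℝ) :
    (∑ i ∈ s, c i * y i) ^ 2 ≤ (∑ i ∈ s, |c i|) * ∑ i ∈ s, |c i| * y i ^ 2 :=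
  sum_sq_le_sum_mul_sum_of_sq_le_mul s (fun _ _ => abs_nonneg _) (fun _ _ => by positivity)
    fun i _ => by rw [mul_pow, ← mul_assoc, ← sq, sq_abs]

lemma Set.Ico_symmDiff_Ico_subset {α : Type*} [LinearOrder α] (a b a' b' : α) :
    Ico a b ∆ Ico a' b' ⊆ uIcc a a' ∪ uIcc b b' := by
  have key : ∀ {a b a' b' : α}, Ico a b \ Ico a' b' ⊆ uIcc a a' ∪ uIcc b b' := by
    intro a b a' b' t ⟨⟨hat, htb⟩, ht'⟩
    simp only [mem_Ico, not_and, not_lt] at ht'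
    rcases lt_or_ge t a' with h | h
    · exact Or.inl (mem_uIcc.mpr (Or.inl ⟨hat, h.le⟩))
    · exact Or.inr (mem_uIcc.mpr (Or.inr ⟨ht' h, htb.le⟩))
  refine union_subset key (key.trans ?_)
  rw [uIcc_comm a', uIcc_comm b']

lemma volume_real_Ico_symmDiff_Ico_le (a b a' b' : ℝ) :
    volume.real (Set.Ico a b ∆ Set.Ico a' b') ≤ |a - a'| + |b - b'| := by
  have hfin : volume (Set.uIcc a a' ∪ Set.uIcc b b') ≠ ⊤ :=
    (isCompact_uIcc.union isCompact_uIcc).measure_lt_top.ne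
  calc volume.real (Set.Ico a b ∆ Set.Ico a' b')
      ≤ volume.real (Set.uIcc a a' ∪ Set.uIcc b b') :=
        measureReal_mono (Set.Ico_symmDiff_Ico_subset a b a' b') hfin
    _ ≤ volume.real (Set.uIcc a a') + volume.real (Set.uIcc b b') := measureReal_union_le _ _
    _ = |a - a'| + |b - b'| := by
        rw [Real.volume_real_interval, Real.volume_real_interval, abs_sub_comm a', abs_sub_comm b']

lemma volume_Ico_symmDiff_Ico_ne_top (a b a' b' : ℝ) :
    volume (Set.Ico a b ∆ Set.Ico a' b') ≠ ⊤ :=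
  ((measure_mono (Set.Ico_symmDiff_Ico_subset a b a' b')).trans_lt
    (isCompact_uIcc.union isCompact_uIcc).measure_lt_top).ne

section

variable {Ω : Type*} [MeasurableSpace Ω] {P : Measure Ω}

lemma sqrt_integral_sq_eq_lpNorm {f : Ω → ℝ} (hf : AEStronglyMeasurable f P) :
    √(∫ x, f x ^ 2 ∂P) = lpNorm f 2 P := by
  rw [lpNorm_eq_integral_norm_rpow_toReal two_ne_zero ENNReal.ofNat_ne_top hf,
    ENNReal.toReal_ofNat, ← one_div, ← Real.sqrt_eq_rpow]
  simp_rw [Real.norm_eq_abs, Real.rpow_two, sq_abs]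

lemma sqrt_integral_add_sq_le {f g : Ω → ℝ} (hf : AEStronglyMeasurable f P) (hg : MemLp g 2 P) :
    √(∫ x, (f x + g x) ^ 2 ∂P) ≤ √(∫ x, f x ^ 2 ∂P) + √(∫ x, g x ^ 2 ∂P) := by
  rw [sqrt_integral_sq_eq_lpNorm hf, sqrt_integral_sq_eq_lpNorm hg.1]
  exact (sqrt_integral_sq_eq_lpNorm (hf.add hg.1)).trans_le (lpNorm_add_le' hg one_le_two)

lemma MeasureTheory.MemLp.const_add_mul [IsFiniteMeasure P] {p : ENNReal} {Z : Ω → ℝ}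
    (hZ : MemLp Z p P) (c d : ℝ) : MemLp (fun x => c + d * Z x) p P :=
  (memLp_const c).add (hZ.const_mul d)

lemma integral_add_mul_sq_le [IsProbabilityMeasure P] {Z : Ω → ℝ} (hZ : MemLp Z 2 P) {C : ℝ}
    (hC : ∫ x, Z x ^ 2 ∂P ≤ C) (c d : ℝ) :
    ∫ x, (c + d * Z x) ^ 2 ∂P ≤ 2 * c ^ 2 + 2 * d ^ 2 * C := by
  calc ∫ x, (c + d * Z x) ^ 2 ∂P ≤ ∫ x, 2 * c ^ 2 + 2 * d ^ 2 * Z x ^ 2 ∂P :=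
        integral_mono_of_nonneg (.of_forall fun _ => sq_nonneg _)
          ((integrable_const _).add (hZ.integrable_sq.const_mul _))
          (.of_forall fun x => by nlinarith [sq_nonneg (c - d * Z x)])
    _ = 2 * c ^ 2 + 2 * d ^ 2 * ∫ x, Z x ^ 2 ∂P := by
        rw [integral_add (integrable_const _) (hZ.integrable_sq.const_mul _), integral_const,
          integral_const_mul, probReal_univ, one_smul]
    _ ≤ 2 * c ^ 2 + 2 * d ^ 2 * C := by gcongr

lemma integral_add_mul_sq_le_of_abs_le [IsProbabilityMeasure P] {Z : Ω → ℝ} (hZ : MemLp Z 2 P)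
    {C : ℝ} (hC : ∫ x, Z x ^ 2 ∂P ≤ C) {c d a b : ℝ} (hc : |c| ≤ a) (hd : |d| ≤ b) :
    ∫ x, (c + d * Z x) ^ 2 ∂P ≤ 2 * a ^ 2 + 2 * b ^ 2 * C := by
  have hC0 : 0 ≤ C := (integral_nonneg fun _ => sq_nonneg _).trans hC
  refine (integral_add_mul_sq_le hZ hC c d).trans ?_
  gcongr 2 * ?_ + 2 * ?_ * _
  · exact sq_le_sq.mpr (hc.trans (le_abs_self a))
  · exact sq_le_sq.mpr (hd.trans (le_abs_self b))

lemma ProbabilityTheory.IndepFun.integral_comp_mul_sq_eval {ι : Type*} {X : Ω → ι → ℝ}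
    {V : Ω → ℝ} (h : IndepFun X V P) (hX : Measurable X) (hV : Measurable V) {g : ℝ → ℝ}
    (hg : Measurable g) (i : ι) :
    ∫ x, g (V x) * X x i ^ 2 ∂P = (∫ x, g (V x) ∂P) * ∫ x, X x i ^ 2 ∂P :=
  (h.comp ((measurable_pi_apply i).pow_const 2) hg).symm.integral_fun_mul_eq_mul_integral
    (hg.comp hV).aestronglyMeasurable
    (((measurable_pi_apply i).pow_const 2).comp hX).aestronglyMeasurable

lemma ProbabilityTheory.IndepFun.locationScale {β : Type*} [MeasurableSpace β] {k : ℕ}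
    {Z : ℕ → Ω → ℝ} {V : Ω → β} (h : IndepFun (fun x (j : Fin k) => Z j x) V P) (μ σ : ℕ → ℝ) :
    IndepFun (fun x (j : Fin k) => μ j + σ j * Z j x) V P :=
  h.comp (φ := fun (z : Fin k → ℝ) (j : Fin k) => μ j + σ j * z j)
    (measurable_pi_lambda _ fun j => measurable_const.add
      (measurable_const.mul (measurable_pi_apply j))) measurable_id

lemma integral_indicator_comp_le_volume_real {ν : Ω → ℝ} (hν : Measurable ν)
    (hunif : P.map ν = volume.restrict (Set.Icc 0 1)) {S : Set ℝ} (hS : MeasurableSet S)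
    (hfin : volume S ≠ ⊤) :
    ∫ x, S.indicator (fun _ => (1 : ℝ)) (ν x) ∂P ≤ volume.real S := by
  rw [← integral_map (f := S.indicator fun _ => (1 : ℝ)) hν.aemeasurable
    (measurable_const.indicator hS).aestronglyMeasurable, hunif, integral_indicator_const _ hS,
    smul_eq_mul, mul_one]
  rw [measureReal_restrict_apply hS]
  exact measureReal_mono Set.inter_subset_left hfin

lemma sum_integral_add_mul_sq_le [IsProbabilityMeasure P] {n : ℕ} {Z : ℕ → Ω → ℝ}
    (hZ : ∀ j < n, MemLp (Z j) 2 P) {C : ℝ} (hC : ∀ j < n, ∫ x, Z j x ^ 2 ∂P ≤ C) (c d : ℕ → ℝ) :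
    ∑ j ∈ range n, ∫ x, (c j + d j * Z j x) ^ 2 ∂P
      ≤ 2 * ∑ j ∈ range n, c j ^ 2 + 2 * (∑ j ∈ range n, d j ^ 2) * C := by
  calc _ ≤ ∑ j ∈ range n, (2 * c j ^ 2 + 2 * d j ^ 2 * C) := sum_le_sum fun j hj =>
        integral_add_mul_sq_le (hZ j (mem_range.mp hj)) (hC j (mem_range.mp hj)) _ _
    _ = _ := by rw [sum_add_distrib, mul_sum, mul_sum, sum_mul]

end

lemma abs_sum_range_sub_sum_range_le {w w' : ℕ → ℝ} {n j : ℕ} {ε : ℝ} (hε : 0 ≤ ε)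
    (h : ∀ l < n, |w l - w' l| ≤ ε) (hj : j ≤ n) :
    |∑ l ∈ range j, w l - ∑ l ∈ range j, w' l| ≤ n * ε := by
  rw [← sum_sub_distrib]
  calc |∑ l ∈ range j, (w l - w' l)| ≤ ∑ l ∈ range j, |w l - w' l| := abs_sum_le_sum_abs _ _
    _ ≤ ∑ _l ∈ range j, ε := sum_le_sum fun l hl => h l ((mem_range.mp hl).trans_le hj)
    _ ≤ n * ε := by
        rw [sum_const, card_range, nsmul_eq_mul]
        exact mul_le_mul_of_nonneg_right (by exact_mod_cast hj) hε

/-- Component `j`, counted from `0`, is drawn when `ν` falls in this interval: the paper's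
`[s_{j-1}, s_j)` with components counted from `1`. -/
def mixtureInterval (w : ℕ → ℝ) (j : ℕ) : Set ℝ :=
  Set.Ico (∑ l ∈ range j, w l) (∑ l ∈ range (j + 1), w l)

section Mixture

variable {Ω : Type*} [MeasurableSpace Ω] {P : Measure Ω} {ν : Ω → ℝ} {k : ℕ} {w w' : ℕ → ℝ}

lemma sum_indicator_mixtureInterval_le_one (hw : ∀ j < k, 0 ≤ w j) (t : ℝ) :
    ∑ j ∈ range k, (mixtureInterval w j).indicator (fun _ => (1 : ℝ)) t ≤ 1 := by
  have hdisj : ∀ i ∈ range k, ∀ j ∈ range k, i < j → t ∈ mixtureInterval w i →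
      t ∉ mixtureInterval w j := by
    intro i _ j hj hij hti htj
    have : ∑ l ∈ range (i + 1), w l ≤ ∑ l ∈ range j, w l :=
      sum_le_sum_of_subset_of_nonneg (range_subset_range.mpr hij) fun l hl _ =>
        hw l ((mem_range.mp hl).trans (mem_range.mp hj))
    exact absurd (hti.2.trans_le this) (not_lt.mpr htj.1)
  classical
  simp only [Set.indicator_apply]
  rw [sum_boole]
  exact_mod_cast card_le_one.mpr fun i hi j hj => by
    simp only [mem_filter] at hi hj
    rcases lt_trichotomy i j with h | h | h
    · exact absurd hj.2 (hdisj i hi.1 j hj.1 h hi.2)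
    · exact h
    · exact absurd hi.2 (hdisj j hj.1 i hi.1 h hj.2)

lemma sq_sum_indicator_mixtureInterval_mul_le (hw : ∀ j < k, 0 ≤ w j) (t : ℝ) (y : ℕ → ℝ) :
    (∑ j ∈ range k, (mixtureInterval w j).indicator (fun _ => (1 : ℝ)) t * y j) ^ 2
      ≤ ∑ j ∈ range k, y j ^ 2 := by
  set a := fun j => (mixtureInterval w j).indicator (fun _ => (1 : ℝ)) t
  have ha : ∀ j, |a j| = a j := fun j =>
    abs_of_nonneg (Set.indicator_nonneg (fun _ _ => zero_le_one) t)
  have ha1 : ∀ j, a j ≤ 1 := fun j =>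
    Set.indicator_apply_le' (fun _ => le_rfl) fun _ => zero_le_one
  calc _ ≤ (∑ j ∈ range k, |a j|) * ∑ j ∈ range k, |a j| * y j ^ 2 :=
        sq_sum_mul_le_sum_abs_mul_sum_abs_mul_sq _ _ _
    _ ≤ 1 * ∑ j ∈ range k, y j ^ 2 :=
        mul_le_mul (by simpa only [ha] using sum_indicator_mixtureInterval_le_one hw t)
          (sum_le_sum fun j _ => mul_le_of_le_one_left (sq_nonneg _) ((ha j).trans_le (ha1 j)))
          (sum_nonneg fun j _ => by positivity) zero_le_one
    _ = _ := one_mul _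

@[fun_prop]
lemma measurable_indicator_mixtureInterval (w : ℕ → ℝ) (j : ℕ) :
    Measurable ((mixtureInterval w j).indicator fun _ => (1 : ℝ)) :=
  measurable_const.indicator measurableSet_Ico

lemma memLp_sum_indicator_mixtureInterval_mul (hν : Measurable ν) {Y : ℕ → Ω → ℝ}
    (hY : ∀ j < k, MemLp (Y j) 2 P) :
    MemLp (fun x => ∑ j ∈ range k,
      (mixtureInterval w j).indicator (fun _ => (1 : ℝ)) (ν x) * Y j x) 2 P := by
  refine memLp_finsetSum _ fun j hj => (hY j (mem_range.mp hj)).mul' (p := ⊤) (r := 2) ?_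
  exact memLp_top_of_bound
    ((measurable_indicator_mixtureInterval w j).comp hν).aestronglyMeasurable 1
    (.of_forall fun x => (norm_indicator_le_norm_self _ _).trans norm_one.le)

lemma integral_sq_sum_indicator_mixtureInterval_mul_le (hw : ∀ j < k, 0 ≤ w j)
    {Y : ℕ → Ω → ℝ} (hY : ∀ j < k, MemLp (Y j) 2 P) :
    ∫ x, (∑ j ∈ range k, (mixtureInterval w j).indicator (fun _ => (1 : ℝ)) (ν x) * Y j x) ^ 2 ∂P
      ≤ ∑ j ∈ range k, ∫ x, Y j x ^ 2 ∂P := by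
  have hint : ∀ j ∈ range k, Integrable (fun x => Y j x ^ 2) P := fun j hj =>
    (hY j (mem_range.mp hj)).integrable_sq
  rw [← integral_finsetSum _ hint]
  exact integral_mono_of_nonneg (.of_forall fun _ => sq_nonneg _) (integrable_finsetSum _ hint)
    (.of_forall fun x => sq_sum_indicator_mixtureInterval_mul_le hw (ν x) fun j => Y j x)

lemma sq_sum_indicator_sub_mul_le (hw : ∀ j < k, 0 ≤ w j) (hw' : ∀ j < k, 0 ≤ w' j) (t : ℝ)
    (y : ℕ → ℝ) :
    (∑ j ∈ range k, ((mixtureInterval w j).indicator (fun _ => (1 : ℝ)) t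
        - (mixtureInterval w' j).indicator (fun _ => (1 : ℝ)) t) * y j) ^ 2
      ≤ 2 * ∑ j ∈ range k,
        (mixtureInterval w j ∆ mixtureInterval w' j).indicator (fun _ => (1 : ℝ)) t * y j ^ 2 := by
  set a := fun j => (mixtureInterval w j).indicator (fun _ => (1 : ℝ)) t
  set b := fun j => (mixtureInterval w' j).indicator (fun _ => (1 : ℝ)) t
  have ha : ∀ j, 0 ≤ a j := fun j => Set.indicator_nonneg (fun _ _ => zero_le_one) t
  have hb : ∀ j, 0 ≤ b j := fun j => Set.indicator_nonneg (fun _ _ => zero_le_one) t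
  have hsum : ∑ j ∈ range k, |a j - b j| ≤ 2 :=
    calc ∑ j ∈ range k, |a j - b j| ≤ ∑ j ∈ range k, (a j + b j) :=
          sum_le_sum fun j _ => abs_sub_le_iff.mpr ⟨by linarith [hb j], by linarith [ha j]⟩
      _ ≤ 1 + 1 := by
          rw [sum_add_distrib]
          exact add_le_add (sum_indicator_mixtureInterval_le_one hw t)
            (sum_indicator_mixtureInterval_le_one hw' t)
      _ = 2 := one_add_one_eq_two
  have habs : ∀ j, |a j - b j|
      = (mixtureInterval w j ∆ mixtureInterval w' j).indicator (fun _ => (1 : ℝ)) t := fun j =>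
    (Set.abs_indicator_symmDiff _ _ _ t).symm.trans
      (abs_of_nonneg (Set.indicator_nonneg (fun _ _ => zero_le_one) t))
  calc _ ≤ (∑ j ∈ range k, |a j - b j|) * ∑ j ∈ range k, |a j - b j| * y j ^ 2 :=
        sq_sum_mul_le_sum_abs_mul_sum_abs_mul_sq _ _ _
    _ ≤ 2 * ∑ j ∈ range k, |a j - b j| * y j ^ 2 :=
        mul_le_mul_of_nonneg_right hsum (sum_nonneg fun j _ => by positivity)
    _ = _ := by simp only [habs]

lemma integral_indicator_symmDiff_mixtureInterval_le (hν : Measurable ν)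
    (hunif : P.map ν = volume.restrict (Set.Icc 0 1)) {ε : ℝ}
    (hε : ∀ j ≤ k, |∑ l ∈ range j, w l - ∑ l ∈ range j, w' l| ≤ ε) {j : ℕ} (hj : j < k) :
    ∫ x, (mixtureInterval w j ∆ mixtureInterval w' j).indicator (fun _ => (1 : ℝ)) (ν x) ∂P
      ≤ 2 * ε :=
  calc _ ≤ volume.real (mixtureInterval w j ∆ mixtureInterval w' j) :=
        integral_indicator_comp_le_volume_real hν hunif
          (measurableSet_Ico.symmDiff measurableSet_Ico) (volume_Ico_symmDiff_Ico_ne_top _ _ _ _)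
    _ ≤ ε + ε := (volume_real_Ico_symmDiff_Ico_le _ _ _ _).trans
        (add_le_add (hε j hj.le) (hε (j + 1) hj))
    _ = 2 * ε := (two_mul ε).symm

lemma integral_sq_sum_indicator_sub_mul_le (hν : Measurable ν)
    (hunif : P.map ν = volume.restrict (Set.Icc 0 1))
    {X : ℕ → Ω → ℝ} (hX : ∀ j, Measurable (X j)) (hXL2 : ∀ j < k, MemLp (X j) 2 P)
    (hindep : IndepFun (fun x (j : Fin k) => X j x) ν P)
    (hw : ∀ j < k, 0 ≤ w j) (hw' : ∀ j < k, 0 ≤ w' j) {ε M : ℝ}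
    (hε : ∀ j ≤ k, |∑ l ∈ range j, w l - ∑ l ∈ range j, w' l| ≤ ε)
    (hM : ∀ j < k, ∫ x, X j x ^ 2 ∂P ≤ M) :
    ∫ x, (∑ j ∈ range k, ((mixtureInterval w j).indicator (fun _ => (1 : ℝ)) (ν x)
        - (mixtureInterval w' j).indicator (fun _ => (1 : ℝ)) (ν x)) * X j x) ^ 2 ∂P
      ≤ 4 * k * ε * M := by
  set D : ℕ → Set ℝ := fun j => mixtureInterval w j ∆ mixtureInterval w' j
  have hD : ∀ j, MeasurableSet (D j) := fun j => measurableSet_Ico.symmDiff measurableSet_Ico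
  have hint : ∀ j ∈ range k,
      Integrable (fun x => (D j).indicator (fun _ => (1 : ℝ)) (ν x) * X j x ^ 2) P := fun j hj =>
    (hXL2 j (mem_range.mp hj)).integrable_sq.bdd_mul
      ((measurable_const.indicator (hD j)).comp hν).aestronglyMeasurable
      (.of_forall fun _ => (norm_indicator_le_norm_self _ _).trans norm_one.le)
  have hterm : ∀ j < k,
      ∫ x, (D j).indicator (fun _ => (1 : ℝ)) (ν x) * X j x ^ 2 ∂P ≤ 2 * ε * M := fun j hj =>
    calc _ = (∫ x, (D j).indicator (fun _ => (1 : ℝ)) (ν x) ∂P) * ∫ x, X j x ^ 2 ∂P :=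
          hindep.integral_comp_mul_sq_eval (measurable_pi_lambda _ fun i => hX i) hν
            (measurable_const.indicator (hD j)) ⟨j, hj⟩
      _ ≤ 2 * ε * M := mul_le_mul (integral_indicator_symmDiff_mixtureInterval_le hν hunif hε hj)
          (hM j hj) (integral_nonneg fun _ => sq_nonneg _)
          (mul_nonneg zero_le_two ((abs_nonneg _).trans (hε 0 k.zero_le)))
  calc _ ≤ ∫ x, 2 * ∑ j ∈ range k, (D j).indicator (fun _ => (1 : ℝ)) (ν x) * X j x ^ 2 ∂P :=
        integral_mono_of_nonneg (.of_forall fun _ => sq_nonneg _)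
          ((integrable_finsetSum _ hint).const_mul 2)
          (.of_forall fun x => sq_sum_indicator_sub_mul_le hw hw' (ν x) fun j => X j x)
    _ = 2 * ∑ j ∈ range k, ∫ x, (D j).indicator (fun _ => (1 : ℝ)) (ν x) * X j x ^ 2 ∂P := by
        rw [integral_const_mul, integral_finsetSum _ hint]
    _ ≤ 2 * ∑ _j ∈ range k, 2 * ε * M := by
        gcongr with j hj
        exact hterm j (mem_range.mp hj)
    _ = 4 * k * ε * M := by
        rw [sum_const, card_range, nsmul_eq_mul]
        ring

end Mixture

lemma sqrt_add_sqrt_le_mixture_rate {k μbar σbar C δ : ℝ} (hk : 0 ≤ k) (hμ : 0 ≤ μbar)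
    (hσ : 0 ≤ σbar) (hC : 0 ≤ C) (hδ0 : 0 ≤ δ) (hδ1 : δ ≤ 1) :
    √(4 * k * (k * δ) * (2 * μbar ^ 2 + 2 * σbar ^ 2 * C ^ 2)) + √(2 * δ ^ 2 + 2 * δ ^ 2 * C ^ 2)
      ≤ 2 * √2 * (1 + C) * (1 + μbar + σbar) * (1 + k) * √δ := by
  have h2 : √2 ^ 2 = 2 := Real.sq_sqrt zero_le_two
  have hδ : √δ ^ 2 = δ := Real.sq_sqrt hδ0
  have hδle : δ ≤ √δ := Real.le_sqrt_of_sq_le (by nlinarith)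
  have hT : √(4 * k * (k * δ) * (2 * μbar ^ 2 + 2 * σbar ^ 2 * C ^ 2))
      ≤ 2 * √2 * (1 + C) * (μbar + σbar) * k * √δ := by
    -- via `(μbar + σbar * C) ^ 2`
    have hcoef : μbar ^ 2 + σbar ^ 2 * C ^ 2 ≤ ((1 + C) * (μbar + σbar)) ^ 2 := by
      nlinarith [mul_nonneg hμ hσ, mul_nonneg (mul_nonneg hμ hσ) hC, mul_nonneg hμ hC,
        mul_nonneg hσ hC]
    refine Real.sqrt_le_iff.mpr ⟨by positivity, ?_⟩
    calc 4 * k * (k * δ) * (2 * μbar ^ 2 + 2 * σbar ^ 2 * C ^ 2)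
        = 8 * k ^ 2 * δ * (μbar ^ 2 + σbar ^ 2 * C ^ 2) := by ring
      _ ≤ 8 * k ^ 2 * δ * ((1 + C) * (μbar + σbar)) ^ 2 := by gcongr
      _ = _ := by ring_nf; rw [h2, hδ]; ring
  have hU : √(2 * δ ^ 2 + 2 * δ ^ 2 * C ^ 2) ≤ √2 * (1 + C) * √δ := by
    refine Real.sqrt_le_iff.mpr ⟨by positivity, ?_⟩
    calc 2 * δ ^ 2 + 2 * δ ^ 2 * C ^ 2 ≤ 2 * (1 + C) ^ 2 * δ ^ 2 := by nlinarith
      _ ≤ 2 * (1 + C) ^ 2 * √δ ^ 2 := by gcongr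
      _ = _ := by rw [mul_pow, mul_pow, h2]
  calc _ ≤ 2 * √2 * (1 + C) * (μbar + σbar) * k * √δ + √2 * (1 + C) * √δ := add_le_add hT hU
    _ = √2 * (1 + C) * √δ * (2 * (μbar + σbar) * k + 1) := by ring
    _ ≤ √2 * (1 + C) * √δ * (2 * (1 + μbar + σbar) * (1 + k)) := by gcongr; nlinarith
    _ = _ := by ring

lemma abs_le_and_sum_sq_le_of_sqrt_sum_le {n : ℕ} {a b c : ℕ → ℝ} {δ : ℝ} (hδ : 0 ≤ δ)
    (h : √(∑ j ∈ range n, (a j ^ 2 + b j ^ 2 + c j ^ 2)) ≤ δ) :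
    (∀ j < n, |a j| ≤ δ) ∧ ∑ j ∈ range n, b j ^ 2 ≤ δ ^ 2 ∧ ∑ j ∈ range n, c j ^ 2 ≤ δ ^ 2 := by
  have hsum := (Real.sqrt_le_left hδ).mp h
  refine ⟨fun j hj => abs_le_of_sq_le_sq ?_ hδ, (sum_le_sum fun j _ => ?_).trans hsum,
    (sum_le_sum fun j _ => ?_).trans hsum⟩
  · refine le_trans ?_ ((single_le_sum (fun j _ => by positivity) (mem_range.mpr hj)).trans hsum)
    nlinarith
  all_goals nlinarith

theorem stmt_0_general
    {Ω : Type*} [MeasurableSpace Ω] (P : Measure Ω) [IsProbabilityMeasure P]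
    (k : ℕ) (hk : 1 ≤ k)
    (ν : Ω → ℝ) (hνmeas : Measurable ν)
    (hνunif : P.map ν = volume.restrict (Set.Icc (0:ℝ) 1))
    (Z : ℕ → Ω → ℝ) (hZmeas : ∀ j, Measurable (Z j))
    (hindep : IndepFun (fun x (j : Fin k) => Z j x) ν P)
    (CZ : ℝ) (hCZ : 0 ≤ CZ)
    (hZint : ∀ j, j < k → Integrable (fun x => (Z j x) ^ 2) P)
    (hZmom : ∀ j, j < k → (∫ x, (Z j x) ^ 2 ∂P) ≤ CZ ^ 2)
    (w w' μ μ' σ σ' : ℕ → ℝ) (μbar σbar : ℝ)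
    (hw0 : ∀ j, j < k → 0 ≤ w j) (hw'0 : ∀ j, j < k → 0 ≤ w' j)
    (hμ : ∀ j, j < k → |μ j| ≤ μbar)
    (hσ : ∀ j, j < k → |σ j| ≤ σbar)
    (δ : ℝ) (hδ0 : 0 ≤ δ) (hδ1 : δ ≤ 1)
    (hdist : Real.sqrt (∑ j ∈ range k,
        ((w j - w' j) ^ 2 + (μ j - μ' j) ^ 2 + (σ j - σ' j) ^ 2)) ≤ δ) :
    Real.sqrt (∫ x,
        ((∑ j ∈ range k,
            Set.indicator (Set.Ico (∑ l ∈ range j, w l) (∑ l ∈ range (j+1), w l))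
              (fun _ => (1:ℝ)) (ν x) * (μ j + σ j * Z j x))
          - ∑ j ∈ range k,
            Set.indicator (Set.Ico (∑ l ∈ range j, w' l) (∑ l ∈ range (j+1), w' l))
              (fun _ => (1:ℝ)) (ν x) * (μ' j + σ' j * Z j x)) ^ 2 ∂P)
      ≤ 2 * Real.sqrt 2 * (1 + CZ) * (1 + μbar + σbar) * (1 + (k:ℝ)) * Real.sqrt δ := by
  have hμbar : 0 ≤ μbar := (abs_nonneg _).trans (hμ 0 hk)
  have hσbar : 0 ≤ σbar := (abs_nonneg _).trans (hσ 0 hk)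
  obtain ⟨hw, hΔμ, hΔσ⟩ := abs_le_and_sum_sq_le_of_sqrt_sum_le hδ0 hdist
  have hZL2 : ∀ j < k, MemLp (Z j) 2 P := fun j hj =>
    (memLp_two_iff_integrable_sq (hZmeas j).aestronglyMeasurable).mpr (hZint j hj)
  have hT := integral_sq_sum_indicator_sub_mul_le (X := fun j x => μ j + σ j * Z j x)
    (ε := k * δ) (M := 2 * μbar ^ 2 + 2 * σbar ^ 2 * CZ ^ 2) hνmeas hνunif (fun j => by fun_prop)
    (fun j hj => (hZL2 j hj).const_add_mul _ _) (hindep.locationScale μ σ) hw0 hw'0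
    (fun j hj => abs_sum_range_sub_sum_range_le hδ0 hw hj) fun j hj =>
      integral_add_mul_sq_le_of_abs_le (hZL2 j hj) (hZmom j hj) (hμ j hj) (hσ j hj)
  have hU := (integral_sq_sum_indicator_mixtureInterval_mul_le (P := P) (ν := ν) hw'0
      (Y := fun j x => (μ j - μ' j) + (σ j - σ' j) * Z j x)
      fun j hj => (hZL2 j hj).const_add_mul _ _).trans
    (sum_integral_add_mul_sq_le hZL2 hZmom _ _)
  calc _ = √(∫ x, ((∑ j ∈ range k, ((mixtureInterval w j).indicator (fun _ => (1 : ℝ)) (ν x)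
          - (mixtureInterval w' j).indicator (fun _ => (1 : ℝ)) (ν x)) * (μ j + σ j * Z j x))
        + ∑ j ∈ range k, (mixtureInterval w' j).indicator (fun _ => (1 : ℝ)) (ν x)
          * ((μ j - μ' j) + (σ j - σ' j) * Z j x)) ^ 2 ∂P) := by
        congr 2 with x
        rw [← sum_sub_distrib, ← sum_add_distrib]
        exact congrArg (· ^ 2) (sum_congr rfl fun j _ => by simp only [mixtureInterval]; ring)
    _ ≤ _ := sqrt_integral_add_sq_le (by fun_prop)
        (memLp_sum_indicator_mixtureInterval_mul hνmeas fun j hj => (hZL2 j hj).const_add_mul _ _)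
    _ ≤ √(4 * k * (k * δ) * (2 * μbar ^ 2 + 2 * σbar ^ 2 * CZ ^ 2))
        + √(2 * δ ^ 2 + 2 * δ ^ 2 * CZ ^ 2) :=
        add_le_add (Real.sqrt_le_sqrt hT) (Real.sqrt_le_sqrt (hU.trans (by gcongr)))
    _ ≤ _ := sqrt_add_sqrt_le_mixture_rate k.cast_nonneg hμbar hσbar hCZ hδ0 hδ1

/-- L²-smoothness of simulated Gaussian-mixture draws with respect to the
Euclidean norm on the mixture parameters. -/
theorem stmt_0
    {Ω : Type*} [MeasurableSpace Ω] (P : Measure Ω) [IsProbabilityMeasure P]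
    (k : ℕ) (hk : 1 ≤ k)
    (ν : Ω → ℝ) (hνmeas : Measurable ν)
    (hνunif : P.map ν = volume.restrict (Set.Icc (0:ℝ) 1))
    (Z : ℕ → Ω → ℝ) (hZmeas : ∀ j, Measurable (Z j))
    (hindep : IndepFun (fun x (j : Fin k) => Z j x) ν P)
    (CZ : ℝ) (hCZ : 0 ≤ CZ)
    (hZint : ∀ j, j < k → Integrable (fun x => (Z j x) ^ 2) P)
    (hZmom : ∀ j, j < k → (∫ x, (Z j x) ^ 2 ∂P) ≤ CZ ^ 2)
    (w w' μ μ' σ σ' : ℕ → ℝ) (μbar σbar : ℝ)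
    (hw0 : ∀ j, j < k → 0 ≤ w j) (hw'0 : ∀ j, j < k → 0 ≤ w' j)
    (hwsum : ∑ j ∈ range k, w j ≤ 1) (hw'sum : ∑ j ∈ range k, w' j ≤ 1)
    (hμ : ∀ j, j < k → |μ j| ≤ μbar) (hμ' : ∀ j, j < k → |μ' j| ≤ μbar)
    (hσ : ∀ j, j < k → |σ j| ≤ σbar) (hσ' : ∀ j, j < k → |σ' j| ≤ σbar)
    (δ : ℝ) (hδ0 : 0 ≤ δ) (hδ1 : δ ≤ 1)
    (hdist : Real.sqrt (∑ j ∈ range k,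
        ((w j - w' j) ^ 2 + (μ j - μ' j) ^ 2 + (σ j - σ' j) ^ 2)) ≤ δ) :
    Real.sqrt (∫ x,
        ((∑ j ∈ range k,
            Set.indicator (Set.Ico (∑ l ∈ range j, w l) (∑ l ∈ range (j+1), w l))
              (fun _ => (1:ℝ)) (ν x) * (μ j + σ j * Z j x))
          - ∑ j ∈ range k,
            Set.indicator (Set.Ico (∑ l ∈ range j, w' l) (∑ l ∈ range (j+1), w' l))
              (fun _ => (1:ℝ)) (ν x) * (μ' j + σ' j * Z j x)) ^ 2 ∂P)
      ≤ 2 * Real.sqrt 2 * (1 + CZ) * (1 + μbar + σbar) * (1 + (k:ℝ)) * Real.sqrt δ :=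
  stmt_0_general P k hk ν hνmeas hνunif Z hZmeas hindep CZ hCZ hZint hZmom w w' μ μ' σ σ' μbar σbar
    hw0 hw'0 hμ hσ δ hδ0 hδ1 hdist
end

section
/- Let 0 < ξ̲ ≤ ξ. The simulated left-tail draw has a finite second moment satisfying the explicit bound ∫₀¹ ((1/v) − 1)^{2/(2+ξ)} dv ≤ (2+ξ)/ξ ≤ (2+ξ̲)/ξ̲. In particular, E[e_ξ²] is finite and bounded uniformly over all ξ ≥ ξ̲ by a constant depending only on ξ̲. -/
/-!
With `p = 2 / (2 + ξ) ∈ (0, 1)`, the integrand `(1/v - 1) ^ p` is dominated on `(0, 1)` by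
`v ^ (-p)`, which is integrable near `0` because `p < 1`, with `∫₀¹ v ^ (-p) dv = 1 / (1 - p)`.
For this `p`, `1 / (1 - p) = (2 + ξ) / ξ = 1 + 2 / ξ`, which decreases in `ξ`.
-/

open MeasureTheory Set

namespace Real

variable {p : ℝ}

lemma one_div_sub_one_rpow_le_rpow_neg {v : ℝ} (hv : v ∈ Ioc 0 1) (hp : 0 ≤ p) :
    (1 / v - 1) ^ p ≤ v ^ (-p) := by
  have hsub : 0 ≤ 1 / v - 1 := sub_nonneg.2 (one_le_one_div hv.1 hv.2)
  calc (1 / v - 1) ^ p ≤ (1 / v) ^ p := rpow_le_rpow hsub (by linarith) hp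
    _ = v ^ (-p) := by rw [one_div, inv_rpow hv.1.le, rpow_neg hv.1.le]

lemma integrableOn_Ioo_zero_one_rpow_neg (hp : p < 1) :
    IntegrableOn (fun v : ℝ => v ^ (-p)) (Ioo 0 1) :=
  (intervalIntegral.integrableOn_Ioo_rpow_iff one_pos).2 (by linarith)

lemma setIntegral_Ioo_zero_one_rpow_neg (hp : p < 1) :
    ∫ v in Ioo (0 : ℝ) 1, v ^ (-p) = 1 / (1 - p) := by
  rw [← integral_Ioc_eq_integral_Ioo, ← intervalIntegral.integral_of_le zero_le_one,
    integral_rpow (Or.inl (by linarith)), one_rpow, zero_rpow (by linarith)]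
  ring

lemma integrableOn_one_div_sub_one_rpow (hp₀ : 0 ≤ p) (hp₁ : p < 1) :
    IntegrableOn (fun v : ℝ => (1 / v - 1) ^ p) (Ioo 0 1) := by
  have hcont : ContinuousOn (fun v : ℝ => (1 / v - 1) ^ p) (Ioo 0 1) :=
    ((continuousOn_const.div continuousOn_id fun _ hv => hv.1.ne').sub
      continuousOn_const).rpow_const fun _ _ => Or.inr hp₀
  refine (integrableOn_Ioo_zero_one_rpow_neg hp₁).mono'
    (hcont.aestronglyMeasurable measurableSet_Ioo) ?_
  filter_upwards [ae_restrict_mem measurableSet_Ioo] with v hv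
  rw [norm_eq_abs, abs_of_nonneg (rpow_nonneg (sub_nonneg.2 (one_le_one_div hv.1 hv.2.le)) _)]
  exact one_div_sub_one_rpow_le_rpow_neg (Ioo_subset_Ioc_self hv) hp₀

lemma setIntegral_one_div_sub_one_rpow_le (hp₀ : 0 ≤ p) (hp₁ : p < 1) :
    ∫ v in Ioo (0 : ℝ) 1, (1 / v - 1) ^ p ≤ 1 / (1 - p) := by
  calc ∫ v in Ioo (0 : ℝ) 1, (1 / v - 1) ^ p
      ≤ ∫ v in Ioo (0 : ℝ) 1, v ^ (-p) :=
        setIntegral_mono_on (integrableOn_one_div_sub_one_rpow hp₀ hp₁)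
          (integrableOn_Ioo_zero_one_rpow_neg hp₁) measurableSet_Ioo
          fun v hv => one_div_sub_one_rpow_le_rpow_neg (Ioo_subset_Ioc_self hv) hp₀
    _ = 1 / (1 - p) := setIntegral_Ioo_zero_one_rpow_neg hp₁

end Real

lemma one_div_one_sub_two_div_two_add {ξ : ℝ} (hξ : 2 + ξ ≠ 0) :
    1 / (1 - 2 / (2 + ξ)) = (2 + ξ) / ξ := by
  rw [one_sub_div hξ, add_sub_cancel_left, one_div_div]

lemma two_add_div_self_antitoneOn : AntitoneOn (fun ξ : ℝ => (2 + ξ) / ξ) (Ioi 0) := by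
  intro a ha b hb hab
  rw [div_le_div_iff₀ (mem_Ioi.1 hb) (mem_Ioi.1 ha)]
  nlinarith

/-- The simulated left-tail draw has a finite second moment, bounded by `(2+ξ)/ξ`,
uniformly over `ξ ≥ ξ̲` by `(2+ξ̲)/ξ̲`. -/
theorem stmt_4 (ξl ξ : ℝ) (hξl : 0 < ξl) (hle : ξl ≤ ξ) :
    IntegrableOn (fun v : ℝ => (1 / v - 1) ^ ((2:ℝ) / (2 + ξ))) (Set.Ioo 0 1) volume
    ∧ (∫ v in Set.Ioo (0:ℝ) 1, (1 / v - 1) ^ ((2:ℝ) / (2 + ξ))) ≤ (2 + ξ) / ξ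
    ∧ (2 + ξ) / ξ ≤ (2 + ξl) / ξl := by
  have hξ : 0 < ξ := hξl.trans_le hle
  have hp₀ : 0 ≤ 2 / (2 + ξ) := by positivity
  have hp₁ : 2 / (2 + ξ) < 1 := (div_lt_one (by linarith)).2 (by linarith)
  refine ⟨Real.integrableOn_one_div_sub_one_rpow hp₀ hp₁, ?_,
    two_add_div_self_antitoneOn hξl hξ hle⟩
  calc _ ≤ 1 / (1 - 2 / (2 + ξ)) := Real.setIntegral_one_div_sub_one_rpow_le hp₀ hp₁
    _ = (2 + ξ) / ξ := one_div_one_sub_two_div_two_add (by positivity)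
end

section
/- Let 0 < ξ̲ ≤ ξ̄ < ∞. There exists a finite constant C, depending only on ξ̲ and ξ̄, such that for all ξ₁, ξ₂ ∈ [ξ̲, ξ̄]: (∫₀¹ |T_{ξ₁}(v) − T_{ξ₂}(v)|² dv)^{1/2} ≤ C·|ξ₁ − ξ₂|. Equivalently, if ν is uniform on (0,1), the simulated left-tail draws are Lipschitz in the tail index in L²: (E|e_{ξ₁} − e_{ξ₂}|²)^{1/2} ≤ C|ξ₁ − ξ₂|. -/
/-!
Write `1 / v - 1 = (1 - v) / v` and `m = min v (1 - v)`. For exponents `0 ≤ t ≤ d < 1/2` the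
`t`-derivative of `((1 - v) / v) ^ t` is bounded by `m ^ (-d) * (-log m) ≤ m ^ (-(d + η)) / η`,
so by the mean value theorem the squared difference of two draws is at most `(|a - b| / η) ^ 2`
times `m ^ (-p) ≤ v ^ (-p) + (1 - v) ^ (-p)`, `p = 2 (d + η)`. Choosing `η` small makes `p < 1`,
so this majorant is integrable on `(0, 1)`. Finally `ξ ↦ 1 / (2 + ξ)` is `1/4`-Lipschitz on
`[0, ∞)`.
-/

open MeasureTheory Real Set

lemma neg_log_le_rpow_neg_div {v η : ℝ} (hv : 0 < v) (hη : 0 < η) :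
    -log v ≤ v ^ (-η) / η := by
  simpa [log_inv, inv_rpow hv.le, rpow_neg hv.le] using log_le_rpow_div (inv_nonneg.2 hv.le) hη

lemma abs_log_div_le_neg_log_min {u w : ℝ} (hu : 0 < u) (hu₁ : u ≤ 1) (hw : 0 < w)
    (hw₁ : w ≤ 1) : |log (w / u)| ≤ -log (min u w) := by
  have hmu : log (min u w) ≤ log u := log_le_log (lt_min hu hw) (min_le_left u w)
  have hmw : log (min u w) ≤ log w := log_le_log (lt_min hu hw) (min_le_right u w)
  rw [log_div hw.ne' hu.ne', abs_sub_le_iff]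
  constructor <;> linarith [log_nonpos hu.le hu₁, log_nonpos hw.le hw₁]

lemma div_rpow_le_min_rpow_neg {u w t d : ℝ} (hu : 0 < u) (hu₁ : u ≤ 1) (hw : 0 < w)
    (hw₁ : w ≤ 1) (ht : 0 ≤ t) (htd : t ≤ d) : (w / u) ^ t ≤ min u w ^ (-d) :=
  calc (w / u) ^ t = w ^ t / u ^ t := div_rpow hw.le hu.le t
    _ ≤ 1 / u ^ t := by gcongr; exact rpow_le_one hw.le hw₁ ht
    _ = u ^ (-t) := by rw [rpow_neg hu.le, one_div]
    _ ≤ min u w ^ (-t) := rpow_le_rpow_of_nonpos (lt_min hu hw) (min_le_left u w) (by linarith)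
    _ ≤ min u w ^ (-d) :=
      rpow_le_rpow_of_exponent_ge (lt_min hu hw) ((min_le_left u w).trans hu₁) (by linarith)

lemma abs_div_rpow_mul_log_le {u w t d η : ℝ} (hu : 0 < u) (hu₁ : u ≤ 1) (hw : 0 < w)
    (hw₁ : w ≤ 1) (ht : 0 ≤ t) (htd : t ≤ d) (hη : 0 < η) :
    |(w / u) ^ t * log (w / u)| ≤ min u w ^ (-(d + η)) / η := by
  have hm : 0 < min u w := lt_min hu hw
  rw [abs_mul, abs_of_nonneg (rpow_nonneg (div_pos hw hu).le t), neg_add, rpow_add hm,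
    mul_div_assoc]
  exact mul_le_mul (div_rpow_le_min_rpow_neg hu hu₁ hw hw₁ ht htd)
    ((abs_log_div_le_neg_log_min hu hu₁ hw hw₁).trans (neg_log_le_rpow_neg_div hm hη))
    (abs_nonneg _) (rpow_nonneg hm.le _)

lemma abs_rpow_sub_rpow_le_of_abs_rpow_mul_log_le {x c d K a b : ℝ} (hx : 0 < x)
    (hK : ∀ t ∈ Icc c d, |x ^ t * log x| ≤ K) (ha : a ∈ Icc c d) (hb : b ∈ Icc c d) :
    |x ^ a - x ^ b| ≤ K * |a - b| :=
  (convex_Icc c d).norm_image_sub_le_of_norm_hasDerivWithin_le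
    (fun t _ => (hasStrictDerivAt_const_rpow hx t).hasDerivAt.hasDerivWithinAt) hK hb ha

lemma sq_one_div_sub_one_rpow_sub_le {v a b d η : ℝ} (hv : v ∈ Ioo (0 : ℝ) 1)
    (ha : a ∈ Icc 0 d) (hb : b ∈ Icc 0 d) (hη : 0 < η) :
    ((1 / v - 1) ^ a - (1 / v - 1) ^ b) ^ 2 ≤
      (|a - b| / η) ^ 2 * (v ^ (-(2 * (d + η))) + (1 - v) ^ (-(2 * (d + η)))) := by
  obtain ⟨hv₀, hv₁⟩ := hv
  have hw : 0 < 1 - v := by linarith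
  have hx : 1 / v - 1 = (1 - v) / v := by field_simp
  set m := min v (1 - v)
  have hm : 0 < m := lt_min hv₀ hw
  have hdiff : |(1 / v - 1) ^ a - (1 / v - 1) ^ b| ≤ m ^ (-(d + η)) / η * |a - b| := by
    rw [hx]
    exact abs_rpow_sub_rpow_le_of_abs_rpow_mul_log_le (div_pos hw hv₀)
      (fun t ht => abs_div_rpow_mul_log_le hv₀ hv₁.le hw (by linarith) ht.1 ht.2 hη) ha hb
  have hmin : m ^ (-(2 * (d + η))) ≤ v ^ (-(2 * (d + η))) + (1 - v) ^ (-(2 * (d + η))) := by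
    rcases min_choice v (1 - v) with h | h <;> rw [show m = _ from h] <;>
      linarith [rpow_nonneg hv₀.le (-(2 * (d + η))), rpow_nonneg hw.le (-(2 * (d + η)))]
  calc ((1 / v - 1) ^ a - (1 / v - 1) ^ b) ^ 2
      = |(1 / v - 1) ^ a - (1 / v - 1) ^ b| ^ 2 := (sq_abs _).symm
    _ ≤ (m ^ (-(d + η)) / η * |a - b|) ^ 2 := by gcongr
    _ = (|a - b| / η) ^ 2 * m ^ (-(2 * (d + η))) := by
      rw [show -(2 * (d + η)) = -(d + η) * (2 : ℕ) by push_cast; ring, rpow_mul_natCast hm.le]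
      ring
    _ ≤ _ := by gcongr

lemma integrableOn_rpow_neg_add_one_sub_rpow_neg {p : ℝ} (hp : p < 1) :
    IntegrableOn (fun v : ℝ => v ^ (-p) + (1 - v) ^ (-p)) (Ioo 0 1) := by
  have h₁ : IntervalIntegrable (fun v : ℝ => v ^ (-p)) volume 0 1 :=
    intervalIntegral.intervalIntegrable_rpow' (by linarith)
  have h₂ : IntervalIntegrable (fun v : ℝ => (1 - v) ^ (-p)) volume 0 1 := by
    simpa using (h₁.comp_sub_left 1).symm
  exact ((intervalIntegrable_iff_integrableOn_Ioo_of_le zero_le_one).1 (h₁.add h₂))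

lemma exists_sqrt_integral_sq_one_div_sub_one_rpow_sub_le {d : ℝ} (hd : d < 1 / 2) :
    ∃ C : ℝ, 0 ≤ C ∧ ∀ a b : ℝ, a ∈ Icc 0 d → b ∈ Icc 0 d →
      √(∫ v in Ioo (0 : ℝ) 1, ((1 / v - 1) ^ a - (1 / v - 1) ^ b) ^ 2) ≤ C * |a - b| := by
  set η := (1 / 2 - d) / 2 with hη_def
  have hη : 0 < η := by positivity
  set H : ℝ → ℝ := fun v => v ^ (-(2 * (d + η))) + (1 - v) ^ (-(2 * (d + η)))
  have hH : IntegrableOn H (Ioo 0 1) :=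
    integrableOn_rpow_neg_add_one_sub_rpow_neg (by linarith [hη_def])
  refine ⟨√(∫ v in Ioo (0 : ℝ) 1, H v) / η, by positivity, fun a b ha hb => ?_⟩
  have hmono : ∫ v in Ioo (0 : ℝ) 1, ((1 / v - 1) ^ a - (1 / v - 1) ^ b) ^ 2 ≤
      ∫ v in Ioo (0 : ℝ) 1, (|a - b| / η) ^ 2 * H v :=
    setIntegral_mono_of_nonneg (fun _ _ => sq_nonneg _)
      (fun v hv => sq_one_div_sub_one_rpow_sub_le hv ha hb hη) (hH.const_mul _)
  calc √(∫ v in Ioo (0 : ℝ) 1, ((1 / v - 1) ^ a - (1 / v - 1) ^ b) ^ 2)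
      ≤ √((|a - b| / η) ^ 2 * ∫ v in Ioo (0 : ℝ) 1, H v) := by
        rw [← integral_const_mul]; exact sqrt_le_sqrt hmono
    _ = √(∫ v in Ioo (0 : ℝ) 1, H v) / η * |a - b| := by
        rw [sqrt_mul (sq_nonneg _), sqrt_sq (by positivity)]; ring

lemma abs_one_div_two_add_sub_le {ξ₁ ξ₂ : ℝ} (h₁ : 0 ≤ ξ₁) (h₂ : 0 ≤ ξ₂) :
    |1 / (2 + ξ₁) - 1 / (2 + ξ₂)| ≤ |ξ₁ - ξ₂| / 4 := by
  have hprod : 4 ≤ (2 + ξ₁) * (2 + ξ₂) := by nlinarith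
  rw [div_sub_div _ _ (by positivity) (by positivity), abs_div,
    abs_of_pos (by positivity : 0 < (2 + ξ₁) * (2 + ξ₂)), abs_sub_comm ξ₁,
    show 1 * (2 + ξ₂) - (2 + ξ₁) * 1 = ξ₂ - ξ₁ by ring]
  exact div_le_div_of_nonneg_left (abs_nonneg _) (by norm_num) hprod

theorem stmt_5_general (ξl ξu : ℝ) (hξl : 0 < ξl) :
    ∃ C : ℝ, 0 ≤ C ∧ ∀ ξ₁ ξ₂ : ℝ, ξ₁ ∈ Set.Icc ξl ξu → ξ₂ ∈ Set.Icc ξl ξu →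
      Real.sqrt (∫ v in Set.Ioo (0:ℝ) 1,
          ((-((1 / v - 1) ^ ((1:ℝ) / (2 + ξ₁)))) -
            (-((1 / v - 1) ^ ((1:ℝ) / (2 + ξ₂))))) ^ 2)
        ≤ C * |ξ₁ - ξ₂| := by
  have hd : 1 / (2 + ξl) < 1 / 2 := one_div_lt_one_div_of_lt two_pos (by linarith)
  obtain ⟨C, hC, hbound⟩ := exists_sqrt_integral_sq_one_div_sub_one_rpow_sub_le hd
  have hexp : ∀ ξ ∈ Icc ξl ξu, 1 / (2 + ξ) ∈ Icc 0 (1 / (2 + ξl)) := fun ξ hξ =>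
    ⟨one_div_nonneg.2 (by linarith [hξ.1]),
      one_div_le_one_div_of_le (by linarith) (by linarith [hξ.1])⟩
  refine ⟨C / 4, by positivity, fun ξ₁ ξ₂ hξ₁ hξ₂ => ?_⟩
  simp only [neg_sub_neg]
  calc _ ≤ C * |1 / (2 + ξ₂) - 1 / (2 + ξ₁)| := hbound _ _ (hexp ξ₂ hξ₂) (hexp ξ₁ hξ₁)
    _ ≤ C * (|ξ₁ - ξ₂| / 4) := by
      rw [abs_sub_comm]
      gcongr
      exact abs_one_div_two_add_sub_le (by linarith [hξ₁.1]) (by linarith [hξ₂.1])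
    _ = C / 4 * |ξ₁ - ξ₂| := by ring

/-- The simulated left-tail draws are Lipschitz in the tail index in `L²`,
uniformly over a compact range of tail indices. -/
theorem stmt_5 (ξl ξu : ℝ) (hξl : 0 < ξl) (hle : ξl ≤ ξu) :
    ∃ C : ℝ, 0 ≤ C ∧ ∀ ξ₁ ξ₂ : ℝ, ξ₁ ∈ Set.Icc ξl ξu → ξ₂ ∈ Set.Icc ξl ξu →
      Real.sqrt (∫ v in Set.Ioo (0:ℝ) 1,
          ((-((1 / v - 1) ^ ((1:ℝ) / (2 + ξ₁)))) -
            (-((1 / v - 1) ^ ((1:ℝ) / (2 + ξ₂))))) ^ 2)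
        ≤ C * |ξ₁ - ξ₂| :=
  stmt_5_general ξl ξu hξl
end

section
/- Let σ > 0 and let π : ℝ → [0,∞) be measurable with ∫ τ² π(τ) dτ < ∞. Then lim_{μ → 0, μ ≠ 0} (1/μ²) ∫ |ψ_{0,σ²}(τ) − ψ_{μ,σ²}(τ)|² π(τ) dτ = ∫ e^{−σ²τ²} τ² π(τ) dτ. In particular, the π-weighted L² distance between the characteristic functions of N(0,σ²) and N(μ,σ²) vanishes linearly in |μ| as μ → 0. -/
open MeasureTheory Filter Topology Complex

/-!
Since `ψ_{μ,σ²}(τ) = e^{iτμ} ψ_{0,σ²}(τ)`, we have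
`|ψ_{0,σ²}(τ) - ψ_{μ,σ²}(τ)|² = e^{-σ²τ²} (2 sin(τμ/2))² = μ² e^{-σ²τ²} sinc(τμ/2)² τ²`.
After dividing by `μ²`, the integrand is `e^{-σ²τ²} sinc(τμ/2)²` times the integrable
function `τ² π(τ)`; this multiplier is bounded by `1` and tends to `e^{-σ²τ²}` as `μ → 0`,
so dominated convergence gives the limit.
-/

lemma norm_exp_ofReal_sub_exp_add_I_mul (a θ : ℝ) :
    ‖exp (a : ℂ) - exp (a + I * θ)‖ = Real.exp a * |2 * Real.sin (θ / 2)| := by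
  rw [exp_add, ← neg_sub, ← mul_sub_one, norm_neg, norm_mul, norm_exp_ofReal,
    norm_exp_I_mul_ofReal_sub_one, Real.norm_eq_abs]

lemma norm_sq_gaussianCharFun_sub (σ μ τ : ℝ) :
    ‖exp (I * τ * (0 : ℂ) - (σ : ℂ) ^ 2 * τ ^ 2 / 2)
        - exp (I * τ * μ - (σ : ℂ) ^ 2 * τ ^ 2 / 2)‖ ^ 2
      = Real.exp (-(σ ^ 2 * τ ^ 2)) * (2 * Real.sin (τ * μ / 2)) ^ 2 := by
  have key := norm_exp_ofReal_sub_exp_add_I_mul (-(σ ^ 2 * τ ^ 2) / 2) (τ * μ)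
  push_cast at key
  rw [show I * τ * (0 : ℂ) - (σ : ℂ) ^ 2 * τ ^ 2 / 2 = -((σ : ℂ) ^ 2 * τ ^ 2) / 2 by ring,
    show I * τ * μ - (σ : ℂ) ^ 2 * τ ^ 2 / 2 = -((σ : ℂ) ^ 2 * τ ^ 2) / 2 + I * (τ * μ) by ring,
    key, mul_pow, sq_abs, ← Real.exp_nat_mul]
  congr 2
  push_cast
  ring

lemma mul_sinc_eq_sin (x : ℝ) : x * Real.sinc x = Real.sin x := by
  rcases eq_or_ne x 0 with rfl | hx
  · simp
  rw [Real.sinc_of_ne_zero hx]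
  field_simp

lemma tendsto_integral_exp_mul_sinc_sq_mul {f : ℝ → ℝ} (hf : Integrable f) (σ : ℝ) :
    Tendsto (fun μ : ℝ => ∫ τ, Real.exp (-(σ ^ 2 * τ ^ 2)) * Real.sinc (τ * μ / 2) ^ 2 * f τ)
      (𝓝 0) (𝓝 (∫ τ, Real.exp (-(σ ^ 2 * τ ^ 2)) * f τ)) := by
  have hcont (μ : ℝ) :
      Continuous fun τ => Real.exp (-(σ ^ 2 * τ ^ 2)) * Real.sinc (τ * μ / 2) ^ 2 := by
    fun_prop
  refine tendsto_integral_filter_of_dominated_convergence (fun τ => ‖f τ‖)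
    (.of_forall fun μ => (hcont μ).aestronglyMeasurable.mul hf.aestronglyMeasurable)
    (.of_forall fun μ => .of_forall fun τ => ?_) hf.norm (.of_forall fun τ => ?_)
  · have hexp : Real.exp (-(σ ^ 2 * τ ^ 2)) ≤ 1 :=
      Real.exp_le_one_iff.2 (neg_nonpos.2 (by positivity))
    have hsinc : Real.sinc (τ * μ / 2) ^ 2 ≤ 1 := by
      rw [← sq_abs]; exact pow_le_one₀ (abs_nonneg _) (Real.abs_sinc_le_one _)
    rw [norm_mul, Real.norm_of_nonneg (by positivity)]
    exact mul_le_of_le_one_left (norm_nonneg _) (mul_le_one₀ hexp (by positivity) hsinc)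
  · have : Continuous fun μ : ℝ =>
        Real.exp (-(σ ^ 2 * τ ^ 2)) * Real.sinc (τ * μ / 2) ^ 2 * f τ := by
      fun_prop
    simpa using this.tendsto 0

theorem stmt_11_general (σ : ℝ) (π : ℝ → ℝ) (hπi : Integrable (fun τ => τ ^ 2 * π τ)) :
    Filter.Tendsto
      (fun μ : ℝ => (1 / μ ^ 2) *
        ∫ τ : ℝ, (‖
            (Complex.exp (Complex.I * (τ : ℂ) * (0 : ℂ) - (σ : ℂ) ^ 2 * (τ : ℂ) ^ 2 / 2)
              - Complex.exp (Complex.I * (τ : ℂ) * (μ : ℂ)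
                  - (σ : ℂ) ^ 2 * (τ : ℂ) ^ 2 / 2))‖) ^ 2 * π τ)
      (nhdsWithin 0 {0}ᶜ)
      (nhds (∫ τ : ℝ, Real.exp (-(σ ^ 2 * τ ^ 2)) * τ ^ 2 * π τ)) := by
  have hlim := (tendsto_integral_exp_mul_sinc_sq_mul hπi σ).mono_left
    (nhdsWithin_le_nhds (s := {0}ᶜ))
  simp only [← mul_assoc] at hlim
  refine hlim.congr' (eventually_nhdsWithin_of_forall fun μ (hμ : μ ≠ 0) => ?_)
  simp only [← integral_const_mul]
  congr 1 with τ
  rw [norm_sq_gaussianCharFun_sub, ← mul_sinc_eq_sin]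
  field_simp

/-- The `π`-weighted `L²` distance between the characteristic functions of
`N(0,σ²)` and `N(μ,σ²)` vanishes linearly in `|μ|` as `μ → 0`:
`(1/μ²)∫|ψ_{0,σ²} - ψ_{μ,σ²}|² π → ∫ e^{-σ²τ²} τ² π(τ) dτ`. -/
theorem stmt_11 (σ : ℝ) (hσ : 0 < σ) (π : ℝ → ℝ) (hπm : Measurable π)
    (hπ0 : ∀ τ, 0 ≤ π τ) (hπi : Integrable (fun τ => τ ^ 2 * π τ)) :
    Filter.Tendsto
      (fun μ : ℝ => (1 / μ ^ 2) *
        ∫ τ : ℝ, (‖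
            (Complex.exp (Complex.I * (τ : ℂ) * (0 : ℂ) - (σ : ℂ) ^ 2 * (τ : ℂ) ^ 2 / 2)
              - Complex.exp (Complex.I * (τ : ℂ) * (μ : ℂ)
                  - (σ : ℂ) ^ 2 * (τ : ℂ) ^ 2 / 2))‖) ^ 2 * π τ)
      (nhdsWithin 0 {0}ᶜ)
      (nhds (∫ τ : ℝ, Real.exp (-(σ ^ 2 * τ ^ 2)) * τ ^ 2 * π τ)) :=
  stmt_11_general σ π hπi
end

section
/- Let μ_f, μ_g ∈ ℝ and σ_f, σ_g > 0, and let f and g denote the Gaussian densities of N(μ_f, σ_f²) and N(μ_g, σ_g²). Then the squared Hellinger distance has the closed form (1/2)∫_ℝ (√f(x) − √g(x))² dx = 1 − √(2σ_f σ_g/(σ_f² + σ_g²)) · exp( −(μ_f − μ_g)²/(4(σ_f² + σ_g²)) ). -/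
/-!
Expanding the square, the squared Hellinger distance between two probability densities is
`1 - ∫ √(f g)`. For two Gaussian densities, completing the square in the exponent shows that
`√(f g)` is a constant multiple of a shifted `exp (-a x²)`, whose integral is `√(π / a)`.
-/

open MeasureTheory Real ProbabilityTheory

theorem sq_sqrt_sub_sqrt {a b : ℝ} (ha : 0 ≤ a) (hb : 0 ≤ b) :
    (√a - √b) ^ 2 = a + b - 2 * √(a * b) := by
  rw [sub_sq, sq_sqrt ha, sq_sqrt hb, sqrt_mul ha]
  ring

section Hellinger

variable {α : Type*} [MeasurableSpace α] {μ : Measure α} {f g : α → ℝ}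

theorem integrable_sqrt_mul (hf : Integrable f μ) (hg : Integrable g μ)
    (hf0 : 0 ≤ f) (hg0 : 0 ≤ g) : Integrable (fun x ↦ √(f x * g x)) μ := by
  refine (hf.add hg).mono' (continuous_sqrt.comp_aestronglyMeasurable (hf.1.mul hg.1))
    (ae_of_all _ fun x ↦ ?_)
  have hfx : 0 ≤ f x := hf0 x
  have hgx : 0 ≤ g x := hg0 x
  rw [Pi.add_apply, norm_of_nonneg (sqrt_nonneg _), sqrt_le_iff]
  exact ⟨by positivity, by nlinarith⟩

theorem half_integral_sq_sqrt_sub_sqrt (hf : Integrable f μ) (hg : Integrable g μ)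
    (hf0 : 0 ≤ f) (hg0 : 0 ≤ g) (hf1 : ∫ x, f x ∂μ = 1) (hg1 : ∫ x, g x ∂μ = 1) :
    (1 / 2) * ∫ x, (√(f x) - √(g x)) ^ 2 ∂μ = 1 - ∫ x, √(f x * g x) ∂μ := by
  simp_rw [fun x ↦ sq_sqrt_sub_sqrt (hf0 x) (hg0 x)]
  have hfg : Integrable (fun x ↦ f x + g x) μ := hf.add hg
  rw [integral_sub hfg ((integrable_sqrt_mul hf hg hf0 hg0).const_mul 2),
    integral_add hf hg, integral_const_mul, hf1, hg1]
  ring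

end Hellinger

noncomputable def gaussDensity (μ σ x : ℝ) : ℝ :=
  (σ * √(2 * π))⁻¹ * exp (-(x - μ) ^ 2 / (2 * σ ^ 2))

theorem gaussDensity_eq_gaussianPDFReal {σ : ℝ} (hσ : 0 < σ) (μ : ℝ) :
    gaussDensity μ σ = gaussianPDFReal μ (σ ^ 2).toNNReal := by
  ext x
  rw [gaussianPDFReal, gaussDensity, Real.coe_toNNReal _ (sq_nonneg σ), sqrt_mul' _ (sq_nonneg σ),
    sqrt_sq hσ.le, mul_comm σ]

theorem integrable_gaussDensity {σ : ℝ} (hσ : 0 < σ) (μ : ℝ) :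
    Integrable (gaussDensity μ σ) := by
  rw [gaussDensity_eq_gaussianPDFReal hσ]
  exact integrable_gaussianPDFReal _ _

theorem integral_gaussDensity {σ : ℝ} (hσ : 0 < σ) (μ : ℝ) : ∫ x, gaussDensity μ σ x = 1 := by
  rw [gaussDensity_eq_gaussianPDFReal hσ]
  exact integral_gaussianPDFReal_eq_one _ (by positivity)

theorem gaussDensity_nonneg {σ : ℝ} (hσ : 0 ≤ σ) (μ : ℝ) : 0 ≤ gaussDensity μ σ :=
  fun x ↦ by unfold gaussDensity; positivity

theorem integral_exp_neg_mul_sub_sq (b c : ℝ) :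
    ∫ x : ℝ, exp (-b * (x - c) ^ 2) = √(π / b) := by
  rw [integral_sub_right_eq_self (fun x ↦ exp (-b * x ^ 2)) c, integral_gaussian]

theorem gaussDensity_mul_gaussDensity (μf μg σf σg x : ℝ) :
    gaussDensity μf σf x * gaussDensity μg σg x =
      (σf * σg * (2 * π))⁻¹ * exp (-(x - μf) ^ 2 / (2 * σf ^ 2) + -(x - μg) ^ 2 / (2 * σg ^ 2)) := by
  have hconst : (σf * √(2 * π))⁻¹ * (σg * √(2 * π))⁻¹ = (σf * σg * (2 * π))⁻¹ := by
    rw [← mul_inv, mul_mul_mul_comm, mul_self_sqrt (by positivity)]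
  rw [gaussDensity, gaussDensity, exp_add, ← hconst]
  ring

theorem sqrt_gaussDensity_mul_gaussDensity {σf σg : ℝ} (hσf : 0 < σf) (hσg : 0 < σg)
    (μf μg x : ℝ) :
    √(gaussDensity μf σf x * gaussDensity μg σg x) =
      √((σf * σg * (2 * π))⁻¹) * exp (-(μf - μg) ^ 2 / (4 * (σf ^ 2 + σg ^ 2))) *
        exp (-((σf ^ 2 + σg ^ 2) / (4 * σf ^ 2 * σg ^ 2)) *
          (x - (σg ^ 2 * μf + σf ^ 2 * μg) / (σf ^ 2 + σg ^ 2)) ^ 2) := by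
  rw [gaussDensity_mul_gaussDensity, sqrt_mul (by positivity), ← exp_half,
    mul_assoc _ (exp _), ← exp_add]
  congr 2
  field_simp
  ring

theorem integral_sqrt_gaussDensity_mul_gaussDensity {σf σg : ℝ} (hσf : 0 < σf) (hσg : 0 < σg)
    (μf μg : ℝ) :
    ∫ x, √(gaussDensity μf σf x * gaussDensity μg σg x) =
      √(2 * σf * σg / (σf ^ 2 + σg ^ 2)) * exp (-(μf - μg) ^ 2 / (4 * (σf ^ 2 + σg ^ 2))) := by
  simp_rw [sqrt_gaussDensity_mul_gaussDensity hσf hσg]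
  rw [integral_const_mul, integral_exp_neg_mul_sub_sq, mul_right_comm, ← sqrt_mul (by positivity)]
  congr 2
  field_simp
  ring

/-- Closed form for the squared Hellinger distance between two univariate
Gaussian densities. -/
theorem stmt_12 (μf μg σf σg : ℝ) (hσf : 0 < σf) (hσg : 0 < σg) :
    (1 / 2) * (∫ x : ℝ,
        (Real.sqrt ((σf * Real.sqrt (2 * Real.pi))⁻¹ *
            Real.exp (-(x - μf) ^ 2 / (2 * σf ^ 2)))
          - Real.sqrt ((σg * Real.sqrt (2 * Real.pi))⁻¹ *
            Real.exp (-(x - μg) ^ 2 / (2 * σg ^ 2)))) ^ 2)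
      = 1 - Real.sqrt (2 * σf * σg / (σf ^ 2 + σg ^ 2)) *
          Real.exp (-(μf - μg) ^ 2 / (4 * (σf ^ 2 + σg ^ 2))) := by
  change (1 / 2) * ∫ x, (√(gaussDensity μf σf x) - √(gaussDensity μg σg x)) ^ 2 = _
  rw [half_integral_sq_sqrt_sub_sqrt (integrable_gaussDensity hσf μf)
      (integrable_gaussDensity hσg μg) (gaussDensity_nonneg hσf.le μf)
      (gaussDensity_nonneg hσg.le μg) (integral_gaussDensity hσf μf)
      (integral_gaussDensity hσg μg),
    integral_sqrt_gaussDensity_mul_gaussDensity hσf hσg]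
end

section
/- Let C₁ ≥ 0, 0 ≤ C₂ < 1, and δ ≥ 0. Let θ₁, θ₂ ∈ ℝ with |θ₁| ≤ C₂, |θ₂| ≤ C₂, and |θ₁ − θ₂| ≤ δ. Let I be a set and q₁, q₂ : I → ℝ with |q_i(v)| ≤ C₁ for all v ∈ I and i = 1,2, and sup_{v∈I} |q₁(v) − q₂(v)| ≤ δ. Fix a sequence (ν_t)_{t≥1} in I and an initial value y₀ ∈ ℝ with |y₀| ≤ C₁/(1 − C₂), and define recursively y_t^{(i)} = θ_i·y_{t−1}^{(i)} + q_i(ν_t), with y₀^{(1)} = y₀^{(2)} = y₀. Then for every t ≥ 0: |y_t^{(1)} − y_t^{(2)}| ≤ δ·(1 + C₁/(1 − C₂))/(1 − C₂). -/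
/-!
Along the common shocks, the difference `d t = y₁ t - y₂ t` satisfies
`d (t+1) = θ₁ d t + (θ₁ - θ₂) y₂ t + (q₁ - q₂)(ν (t+1))`, so `|d|` obeys an affine recursion with
contraction factor `C₂` and forcing term `δ (1 + sup |y₂|)`. The path `y₂` itself obeys
`|y₂ (t+1)| ≤ C₂ |y₂ t| + C₁`, which keeps it in the invariant interval `|y| ≤ C₁ / (1 - C₂)`
containing `y₀`. Both bounds come from the same fact: `b / (1 - c)` is the fixed point of
`x ↦ c x + b`, so a sequence starting below it and dominated by this map stays below it.
-/

theorem le_div_one_sub_of_le_mul_add {a : ℕ → ℝ} {b c : ℝ} (hc₀ : 0 ≤ c) (hc₁ : c < 1)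
    (h₀ : a 0 ≤ b / (1 - c)) (hstep : ∀ t, a (t + 1) ≤ c * a t + b) :
    ∀ t, a t ≤ b / (1 - c) := by
  have hfix : c * (b / (1 - c)) + b = b / (1 - c) := by
    field_simp [(sub_pos.2 hc₁).ne']
    ring
  intro t
  induction t with
  | zero => exact h₀
  | succ t ih =>
    calc a (t + 1) ≤ c * a t + b := hstep t
      _ ≤ c * (b / (1 - c)) + b := by gcongr
      _ = b / (1 - c) := hfix

theorem abs_mul_add_sub_mul_add_le (θ₁ θ₂ x₁ x₂ e₁ e₂ : ℝ) :
    |(θ₁ * x₁ + e₁) - (θ₂ * x₂ + e₂)| ≤ |θ₁| * |x₁ - x₂| + |θ₁ - θ₂| * |x₂| + |e₁ - e₂| := by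
  calc |(θ₁ * x₁ + e₁) - (θ₂ * x₂ + e₂)|
      = |θ₁ * (x₁ - x₂) + (θ₁ - θ₂) * x₂ + (e₁ - e₂)| := by ring_nf
    _ ≤ |θ₁ * (x₁ - x₂)| + |(θ₁ - θ₂) * x₂| + |e₁ - e₂| := abs_add_three _ _ _
    _ = |θ₁| * |x₁ - x₂| + |θ₁ - θ₂| * |x₂| + |e₁ - e₂| := by rw [abs_mul, abs_mul]

theorem stmt_18_general (C₁ C₂ δ : ℝ) (hC₂ : C₂ < 1)
    (hδ : 0 ≤ δ)
    (θ₁ θ₂ : ℝ) (hθ₁ : |θ₁| ≤ C₂) (hθ₂ : |θ₂| ≤ C₂) (hθδ : |θ₁ - θ₂| ≤ δ)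
    {I : Type*} (q₁ q₂ : I → ℝ)
    (hq₂ : ∀ v, |q₂ v| ≤ C₁)
    (hqδ : ∀ v, |q₁ v - q₂ v| ≤ δ)
    (ν : ℕ → I) (y₀ : ℝ) (hy₀ : |y₀| ≤ C₁ / (1 - C₂))
    (y₁ y₂ : ℕ → ℝ) (h₁0 : y₁ 0 = y₀) (h₂0 : y₂ 0 = y₀)
    (h₁ : ∀ t : ℕ, y₁ (t + 1) = θ₁ * y₁ t + q₁ (ν (t + 1)))
    (h₂ : ∀ t : ℕ, y₂ (t + 1) = θ₂ * y₂ t + q₂ (ν (t + 1))) :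
    ∀ t : ℕ, |y₁ t - y₂ t| ≤ δ * (1 + C₁ / (1 - C₂)) / (1 - C₂) := by
  have hC₂0 : 0 ≤ C₂ := (abs_nonneg θ₂).trans hθ₂
  have hM₀ : 0 ≤ C₁ / (1 - C₂) := (abs_nonneg y₀).trans hy₀
  have hy₂ : ∀ t, |y₂ t| ≤ C₁ / (1 - C₂) := by
    refine le_div_one_sub_of_le_mul_add hC₂0 hC₂ (by rwa [h₂0]) fun t => ?_
    rw [h₂ t]
    calc |θ₂ * y₂ t + q₂ (ν (t + 1))| ≤ |θ₂| * |y₂ t| + |q₂ (ν (t + 1))| := by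
          rw [← abs_mul]; exact abs_add_le _ _
      _ ≤ C₂ * |y₂ t| + C₁ := by gcongr; exact hq₂ _
  refine le_div_one_sub_of_le_mul_add hC₂0 hC₂ ?_ fun t => ?_
  · rw [h₁0, h₂0, sub_self, abs_zero]
    exact div_nonneg (mul_nonneg hδ (by linarith)) (by linarith)
  · rw [h₁ t, h₂ t]
    calc _ ≤ _ := abs_mul_add_sub_mul_add_le _ _ _ _ _ _
      _ ≤ C₂ * |y₁ t - y₂ t| + δ * (C₁ / (1 - C₂)) + δ := by
          gcongr
          exacts [hy₂ t, hqδ _]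
      _ = C₂ * |y₁ t - y₂ t| + δ * (1 + C₁ / (1 - C₂)) := by ring

/-- Lipschitz property of a simulated AR(1) path with respect to the
autoregressive parameter and the quantile function of the shocks. -/
theorem stmt_18 (C₁ C₂ δ : ℝ) (hC₁ : 0 ≤ C₁) (hC₂0 : 0 ≤ C₂) (hC₂ : C₂ < 1)
    (hδ : 0 ≤ δ)
    (θ₁ θ₂ : ℝ) (hθ₁ : |θ₁| ≤ C₂) (hθ₂ : |θ₂| ≤ C₂) (hθδ : |θ₁ - θ₂| ≤ δ)
    {I : Type*} (q₁ q₂ : I → ℝ)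
    (hq₁ : ∀ v, |q₁ v| ≤ C₁) (hq₂ : ∀ v, |q₂ v| ≤ C₁)
    (hqδ : ∀ v, |q₁ v - q₂ v| ≤ δ)
    (ν : ℕ → I) (y₀ : ℝ) (hy₀ : |y₀| ≤ C₁ / (1 - C₂))
    (y₁ y₂ : ℕ → ℝ) (h₁0 : y₁ 0 = y₀) (h₂0 : y₂ 0 = y₀)
    (h₁ : ∀ t : ℕ, y₁ (t + 1) = θ₁ * y₁ t + q₁ (ν (t + 1)))
    (h₂ : ∀ t : ℕ, y₂ (t + 1) = θ₂ * y₂ t + q₂ (ν (t + 1))) :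
    ∀ t : ℕ, |y₁ t - y₂ t| ≤ δ * (1 + C₁ / (1 - C₂)) / (1 - C₂) :=
  stmt_18_general C₁ C₂ δ hC₂ hδ θ₁ θ₂ hθ₁ hθ₂ hθδ q₁ q₂ hq₂ hqδ ν y₀ hy₀ y₁ y₂ h₁0 h₂0 h₁ h₂
end

section
/- Let p ≥ 1, let 0 ≤ C₃ < 1 and C₄ ≥ 0, and let g : ℝ × ℝ^p → ℝ satisfy |g(y,θ) − g(ỹ,θ)| ≤ C₃·|y − ỹ| for all y, ỹ ∈ ℝ and all θ ∈ ℝ^p, and |g(y,θ) − g(y,θ̃)| ≤ C₄·‖θ − θ̃‖ for all y ∈ ℝ and all θ, θ̃ ∈ ℝ^p. Let δ ≥ 0, let θ₁, θ₂ ∈ ℝ^p with ‖θ₁ − θ₂‖ ≤ δ, let I be a set and q₁, q₂ : I → ℝ with sup_{v∈I}|q₁(v) − q₂(v)| ≤ δ. Fix a sequence (ν_t)_{t≥1} in I and a common initial value y₀^{(1)} = y₀^{(2)}, and define recursively y_t^{(i)} = g(y_{t−1}^{(i)}, θ_i) + q_i(ν_t). Then for every t ≥ 0: |y_t^{(1)}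 − y_t^{(2)}| ≤ (1 + C₄)·δ/(1 − C₃). -/
/-!
The distance `dₜ = ‖y₁ t - y₂ t‖` between the two paths obeys `dₜ₊₁ ≤ C₃ dₜ + (C₄ δ + δ)`:
the contraction in the state absorbs the past discrepancy, while the parameter and the shock
each add at most their own perturbation. Since `d₀ = 0` lies below the fixed point
`(C₄ δ + δ) / (1 - C₃)` of this affine recursion, so does every `dₜ`.
-/

theorem le_div_one_sub_of_le_mul_add_s19 {d : ℕ → ℝ} {C c : ℝ} (hC0 : 0 ≤ C) (hC1 : C < 1)
    (h0 : d 0 ≤ c / (1 - C)) (hsucc : ∀ t, d (t + 1) ≤ C * d t + c) :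
    ∀ t, d t ≤ c / (1 - C) := by
  have hfix : C * (c / (1 - C)) + c = c / (1 - C) := by
    field_simp [(sub_pos.mpr hC1).ne']
    ring
  intro t
  induction t with
  | zero => exact h0
  | succ t ih =>
    calc d (t + 1) ≤ C * d t + c := hsucc t
      _ ≤ C * (c / (1 - C)) + c := by gcongr
      _ = c / (1 - C) := hfix

section PerturbedRecursion

variable {E Θ : Type*} [SeminormedAddCommGroup E] [SeminormedAddCommGroup Θ]
  {g : E → Θ → E} {C₃ C₄ : ℝ}

theorem norm_perturbed_step_sub_le
    (hgy : ∀ (y y' : E) (θ : Θ), ‖g y θ - g y' θ‖ ≤ C₃ * ‖y - y'‖)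
    (hgθ : ∀ (y : E) (θ θ' : Θ), ‖g y θ - g y θ'‖ ≤ C₄ * ‖θ - θ'‖)
    (y y' : E) (θ θ' : Θ) (e e' : E) :
    ‖(g y θ + e) - (g y' θ' + e')‖ ≤ C₃ * ‖y - y'‖ + C₄ * ‖θ - θ'‖ + ‖e - e'‖ :=
  calc ‖(g y θ + e) - (g y' θ' + e')‖
      = ‖(g y θ - g y' θ) + (g y' θ - g y' θ') + (e - e')‖ := by congr 1; abel
    _ ≤ ‖g y θ - g y' θ‖ + ‖g y' θ - g y' θ'‖ + ‖e - e'‖ := norm_add₃_le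
    _ ≤ C₃ * ‖y - y'‖ + C₄ * ‖θ - θ'‖ + ‖e - e'‖ := by gcongr <;> simp only [hgy, hgθ]

theorem norm_sub_le_of_contracting_recursion (hC₃0 : 0 ≤ C₃) (hC₃ : C₃ < 1) (hC₄ : 0 ≤ C₄)
    (hgy : ∀ (y y' : E) (θ : Θ), ‖g y θ - g y' θ‖ ≤ C₃ * ‖y - y'‖)
    (hgθ : ∀ (y : E) (θ θ' : Θ), ‖g y θ - g y θ'‖ ≤ C₄ * ‖θ - θ'‖)
    {εθ εe : ℝ} {θ₁ θ₂ : Θ} (hθ : ‖θ₁ - θ₂‖ ≤ εθ)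
    {e₁ e₂ : ℕ → E} (he : ∀ t, ‖e₁ t - e₂ t‖ ≤ εe)
    {y₁ y₂ : ℕ → E} (h0 : y₁ 0 = y₂ 0)
    (h1 : ∀ t, y₁ (t + 1) = g (y₁ t) θ₁ + e₁ t) (h2 : ∀ t, y₂ (t + 1) = g (y₂ t) θ₂ + e₂ t) :
    ∀ t, ‖y₁ t - y₂ t‖ ≤ (C₄ * εθ + εe) / (1 - C₃) := by
  have hεθ : 0 ≤ εθ := (norm_nonneg _).trans hθ
  have hεe : 0 ≤ εe := (norm_nonneg _).trans (he 0)
  refine le_div_one_sub_of_le_mul_add_s19 hC₃0 hC₃ ?_ fun t ↦ ?_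
  · rw [h0, sub_self, norm_zero]
    have : 0 < 1 - C₃ := sub_pos.mpr hC₃
    positivity
  · rw [h1, h2]
    calc _ ≤ C₃ * ‖y₁ t - y₂ t‖ + C₄ * ‖θ₁ - θ₂‖ + ‖e₁ t - e₂ t‖ :=
          norm_perturbed_step_sub_le hgy hgθ _ _ _ _ _ _
      _ ≤ C₃ * ‖y₁ t - y₂ t‖ + (C₄ * εθ + εe) := by
          rw [add_assoc]; gcongr; exact he t

end PerturbedRecursion

theorem stmt_19_general (p : ℕ) (C₃ C₄ : ℝ)
    (hC₃0 : 0 ≤ C₃) (hC₃ : C₃ < 1) (hC₄ : 0 ≤ C₄)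
    (g : ℝ → EuclideanSpace ℝ (Fin p) → ℝ)
    (hgy : ∀ (y y' : ℝ) (θ : EuclideanSpace ℝ (Fin p)),
      |g y θ - g y' θ| ≤ C₃ * |y - y'|)
    (hgθ : ∀ (y : ℝ) (θ θ' : EuclideanSpace ℝ (Fin p)),
      |g y θ - g y θ'| ≤ C₄ * ‖θ - θ'‖)
    (δ : ℝ)
    (θ₁ θ₂ : EuclideanSpace ℝ (Fin p)) (hθ : ‖θ₁ - θ₂‖ ≤ δ)
    {I : Type*} (q₁ q₂ : I → ℝ) (hq : ∀ v, |q₁ v - q₂ v| ≤ δ)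
    (ν : ℕ → I) (y0 : ℝ)
    (y₁ y₂ : ℕ → ℝ) (h10 : y₁ 0 = y0) (h20 : y₂ 0 = y0)
    (h1 : ∀ t : ℕ, y₁ (t + 1) = g (y₁ t) θ₁ + q₁ (ν (t + 1)))
    (h2 : ∀ t : ℕ, y₂ (t + 1) = g (y₂ t) θ₂ + q₂ (ν (t + 1))) :
    ∀ t : ℕ, |y₁ t - y₂ t| ≤ (1 + C₄) * δ / (1 - C₃) := by
  intro t
  have hpath := norm_sub_le_of_contracting_recursion hC₃0 hC₃ hC₄
    (by simpa only [Real.norm_eq_abs] using hgy) (by simpa only [Real.norm_eq_abs] using hgθ)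
    hθ (e₁ := fun t ↦ q₁ (ν (t + 1))) (e₂ := fun t ↦ q₂ (ν (t + 1)))
    (fun t ↦ by simpa only [Real.norm_eq_abs] using hq (ν (t + 1)))
    (h10.trans h20.symm) h1 h2 t
  rw [Real.norm_eq_abs] at hpath
  convert hpath using 2
  ring

/-- Lipschitz property of a simulated nonlinear autoregressive path with respect
to the parameter and the quantile function of the shocks. -/
theorem stmt_19 (p : ℕ) (hp : 1 ≤ p) (C₃ C₄ : ℝ)
    (hC₃0 : 0 ≤ C₃) (hC₃ : C₃ < 1) (hC₄ : 0 ≤ C₄)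
    (g : ℝ → EuclideanSpace ℝ (Fin p) → ℝ)
    (hgy : ∀ (y y' : ℝ) (θ : EuclideanSpace ℝ (Fin p)),
      |g y θ - g y' θ| ≤ C₃ * |y - y'|)
    (hgθ : ∀ (y : ℝ) (θ θ' : EuclideanSpace ℝ (Fin p)),
      |g y θ - g y θ'| ≤ C₄ * ‖θ - θ'‖)
    (δ : ℝ) (hδ : 0 ≤ δ)
    (θ₁ θ₂ : EuclideanSpace ℝ (Fin p)) (hθ : ‖θ₁ - θ₂‖ ≤ δ)
    {I : Type*} (q₁ q₂ : I → ℝ) (hq : ∀ v, |q₁ v - q₂ v| ≤ δ)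
    (ν : ℕ → I) (y0 : ℝ)
    (y₁ y₂ : ℕ → ℝ) (h10 : y₁ 0 = y0) (h20 : y₂ 0 = y0)
    (h1 : ∀ t : ℕ, y₁ (t + 1) = g (y₁ t) θ₁ + q₁ (ν (t + 1)))
    (h2 : ∀ t : ℕ, y₂ (t + 1) = g (y₂ t) θ₂ + q₂ (ν (t + 1))) :
    ∀ t : ℕ, |y₁ t - y₂ t| ≤ (1 + C₄) * δ / (1 - C₃) :=
  stmt_19_general p C₃ C₄ hC₃0 hC₃ hC₄ g hgy hgθ δ θ₁ θ₂ hθ q₁ q₂ hq ν y0 y₁ y₂ h10 h20 h1 h2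
end
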